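/- A finite-dimensional left Leibniz algebra L over a field of characteristic 0 such that all left multiplication operators [x,·] ∈ End L are nilpotent is itself nilpotent (i.e., the lower central series L ⊇ [L,L] ⊇ [L,[L,L]]+[[L,L],L] ⊇ ... terminates at 0). -/

import Mathlib

/-- Span of all brackets `[a,b]` with `a ∈ A`, `b ∈ B`. -/
def bracketSpan {k L : Type*} [Field k] [AddCommGroup L] [Module k L]
    (brk : L →ₗ[k] L →ₗ[k] L) (A B : Submodule k L) : Submodule k L :=
  Submodule.span k {z : L | ∃ a ∈ A, ∃ b ∈ B, z = brk a b}

/-- Lower central series by total weight: `lcs brk m` is the span of all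
brackets of elements of total weight `m+1`; `lcs brk 0 = L`,
`lcs brk (m+1) = Σ_{i+j=m} [lcs brk i, lcs brk j]`. -/
def lcs {k L : Type*} [Field k] [AddCommGroup L] [Module k L]
    (brk : L →ₗ[k] L →ₗ[k] L) : ℕ → Submodule k L
  | 0 => ⊤
  | m + 1 => ⨆ i : Fin (m + 1), bracketSpan brk (lcs brk i) (lcs brk (m - i))
decreasing_by
  · exact i.isLt
  · have := i.isLt; omega

/-!
The left multiplications `[x,·]` form a linear subspace `K` of `End L`, and the left Leibniz
identity says exactly that `[[x,·],[y,·]] = [[x,y],·]`, so `K` is a Lie subalgebra and `L` is a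
`K`-module whose action consists of nilpotent endomorphisms. Engel's theorem makes `L` a
nilpotent `K`-module, i.e. the left-normed series `L ⊇ [L,L] ⊇ [L,[L,L]] ⊇ ⋯` vanishes. Finally,
the Leibniz identity `[[x,t],b] = [x,[t,b]] - [t,[x,b]]` lets one rewrite every bracket of total
weight `m+1` as a combination of left-normed ones, so the weight series lies in the left-normed one.
-/

section LeftNormed

variable {k L : Type*} [Field k] [AddCommGroup L] [Module k L] (brk : L →ₗ[k] L →ₗ[k] L)

lemma apply_mem_bracketSpan {A B : Submodule k L} {a b : L} (ha : a ∈ A) (hb : b ∈ B) :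
    brk a b ∈ bracketSpan brk A B :=
  Submodule.subset_span ⟨a, ha, b, hb, rfl⟩

lemma bracketSpan_le {A B T : Submodule k L} (h : ∀ a ∈ A, ∀ b ∈ B, brk a b ∈ T) :
    bracketSpan brk A B ≤ T := by
  rw [bracketSpan, Submodule.span_le]
  rintro z ⟨a, ha, b, hb, rfl⟩
  exact h a ha b hb

lemma bracketSpan_mono {A A' B B' : Submodule k L} (hA : A ≤ A') (hB : B ≤ B') :
    bracketSpan brk A B ≤ bracketSpan brk A' B' :=
  bracketSpan_le brk fun _ ha _ hb => apply_mem_bracketSpan brk (hA ha) (hB hb)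

lemma bracketSpan_bracketSpan_le {A B C T : Submodule k L}
    (h : ∀ a ∈ A, ∀ b ∈ B, ∀ c ∈ C, brk (brk a b) c ∈ T) :
    bracketSpan brk (bracketSpan brk A B) C ≤ T := by
  refine bracketSpan_le brk fun z hz c hc => ?_
  have : bracketSpan brk A B ≤ T.comap (brk.flip c) :=
    bracketSpan_le brk fun a ha b hb => h a ha b hb c hc
  exact this hz

def leftNormedSeries : ℕ → Submodule k L
  | 0 => ⊤
  | m + 1 => bracketSpan brk ⊤ (leftNormedSeries m)

lemma apply_mem_leftNormedSeries_succ (x : L) {m : ℕ} {t : L}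
    (ht : t ∈ leftNormedSeries brk m) : brk x t ∈ leftNormedSeries brk (m + 1) :=
  apply_mem_bracketSpan brk Submodule.mem_top ht

variable {brk}

lemma bracketSpan_leftNormedSeries_le
    (leib : ∀ x y z : L, brk x (brk y z) = brk (brk x y) z + brk y (brk x z)) (i j : ℕ) :
    bracketSpan brk (leftNormedSeries brk i) (leftNormedSeries brk j) ≤
      leftNormedSeries brk (i + j + 1) := by
  induction i generalizing j with
  | zero =>
    rw [zero_add]
    exact bracketSpan_mono brk le_top le_rfl
  | succ i ih =>
    rw [show i + 1 + j + 1 = i + j + 1 + 1 by omega]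
    refine bracketSpan_bracketSpan_le brk fun x _ t ht b hb => ?_
    have hxtb : brk x (brk t b) ∈ leftNormedSeries brk (i + j + 1 + 1) :=
      apply_mem_leftNormedSeries_succ brk x (ih j (apply_mem_bracketSpan brk ht hb))
    have htxb : brk t (brk x b) ∈ leftNormedSeries brk (i + (j + 1) + 1) :=
      ih (j + 1) (apply_mem_bracketSpan brk ht (apply_mem_leftNormedSeries_succ brk x hb))
    rw [show i + (j + 1) + 1 = i + j + 1 + 1 by omega] at htxb
    rw [eq_sub_of_add_eq (leib x t b).symm]
    exact sub_mem hxtb htxb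

lemma lcs_le_leftNormedSeries
    (leib : ∀ x y z : L, brk x (brk y z) = brk (brk x y) z + brk y (brk x z)) (m : ℕ) :
    lcs brk m ≤ leftNormedSeries brk m := by
  induction m using Nat.strong_induction_on with
  | _ m ih =>
    match m with
    | 0 => exact le_top
    | m + 1 =>
      rw [lcs]
      refine iSup_le fun i => ?_
      have hi := i.isLt
      calc bracketSpan brk (lcs brk i) (lcs brk (m - i))
          ≤ bracketSpan brk (leftNormedSeries brk i) (leftNormedSeries brk (m - i)) :=
            bracketSpan_mono brk (ih i (by omega)) (ih (m - i) (by omega))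
        _ ≤ leftNormedSeries brk (i + (m - i) + 1) := bracketSpan_leftNormedSeries_le leib _ _
        _ = leftNormedSeries brk (m + 1) := by rw [Nat.add_sub_cancel' (by omega)]

end LeftNormed

attribute [local instance 100] LieRing.ofAssociativeRing

section LeftMultiplication

variable {k L : Type*} [Field k] [AddCommGroup L] [Module k L] {brk : L →ₗ[k] L →ₗ[k] L}

def leftMulLieSubalgebra
    (leib : ∀ x y z : L, brk x (brk y z) = brk (brk x y) z + brk y (brk x z)) :
    LieSubalgebra k (Module.End k L) :=
  { LinearMap.range brk with
    lie_mem' := by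
      rintro _ _ ⟨a, rfl⟩ ⟨b, rfl⟩
      refine ⟨brk a b, LinearMap.ext fun z => ?_⟩
      simp only [Ring.lie_def, LinearMap.sub_apply, Module.End.mul_apply]
      exact eq_sub_of_add_eq (leib a b z).symm }

variable (leib : ∀ x y z : L, brk x (brk y z) = brk (brk x y) z + brk y (brk x z))

lemma leftNormedSeries_le_lowerCentralSeries (m : ℕ) :
    leftNormedSeries brk m ≤
      (LieModule.lowerCentralSeries k (leftMulLieSubalgebra leib) L m : Submodule k L) := by
  induction m with
  | zero => simp [leftNormedSeries]
  | succ m ih =>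
    refine bracketSpan_le brk fun a _ b hb => ?_
    rw [LieModule.lowerCentralSeries_succ]
    exact LieSubmodule.lie_mem_lie (x := ⟨brk a, a, rfl⟩)
      (LieSubmodule.mem_top _) (ih hb)

end LeftMultiplication

theorem stmt15_general {k L : Type*} [Field k] [AddCommGroup L] [Module k L]
    [FiniteDimensional k L]
    (brk : L →ₗ[k] L →ₗ[k] L)
    (leib : ∀ x y z : L,
      brk x (brk y z) = brk (brk x y) z + brk y (brk x z))
    (hnil : ∀ x : L, ∃ N : ℕ, (brk x) ^ N = 0) :
    ∃ N : ℕ, lcs brk N = ⊥ := by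
  set K := leftMulLieSubalgebra leib
  have hnilK : ∀ x : K, IsNilpotent (LieModule.toEnd k K L x) := by
    rintro ⟨_, a, rfl⟩
    exact hnil a
  have : LieModule.IsNilpotent K L := LieAlgebra.isEngelian_of_isNoetherian L hnilK
  obtain ⟨n, hn⟩ := (LieModule.isNilpotent_iff k K L).mp this
  refine ⟨n, le_bot_iff.mp ?_⟩
  calc lcs brk n ≤ leftNormedSeries brk n := lcs_le_leftNormedSeries leib n
    _ ≤ (LieModule.lowerCentralSeries k K L n : Submodule k L) :=
      leftNormedSeries_le_lowerCentralSeries leib n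
    _ = ⊥ := by rw [hn]; rfl

/-- Engel theorem for Leibniz algebras: a finite-dimensional
left Leibniz algebra over a field of characteristic 0 in which all left
multiplication operators are nilpotent is itself nilpotent. -/
theorem stmt15 {k L : Type*} [Field k] [CharZero k] [AddCommGroup L] [Module k L]
    [FiniteDimensional k L]
    (brk : L →ₗ[k] L →ₗ[k] L)
    (leib : ∀ x y z : L,
      brk x (brk y z) = brk (brk x y) z + brk y (brk x z))
    (hnil : ∀ x : L, ∃ N : ℕ, (brk x) ^ N = 0) :
    ∃ N : ℕ, lcs brk N = ⊥ :=
  stmt15_general brk leib hnil
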